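/- arXiv:1908.06704 — 9 statements merged into one kernel-verified Lean document; each statement's English description precedes it below -/
import Mathlib

section
/- lim_{β→β_c} |1 − csch(2β)| / √(coth(2β)·cosh(2β) − 2) = 1, where β_c = ln(1+√2)/2. -/
open Filter

/-- The hyperbolic cotangent. -/
noncomputable def coth (x : ℝ) : ℝ := Real.cosh x / Real.sinh x

/-- The hyperbolic cosecant. -/
noncomputable def csch (x : ℝ) : ℝ := 1 / Real.sinh x

/-- The critical inverse temperature of the two-dimensional Ising model. -/
noncomputable def betac : ℝ := Real.log (1 + Real.sqrt 2) / 2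

lemma sinh_two_betac : Real.sinh (2 * betac) = 1 := by
  have h2 : (0:ℝ) < 1 + Real.sqrt 2 := by positivity
  have heq : 2 * betac = Real.log (1 + Real.sqrt 2) := by unfold betac; ring
  rw [heq, Real.sinh_eq, Real.exp_neg, Real.exp_log h2]
  have hs : Real.sqrt 2 ^ 2 = 2 := Real.sq_sqrt (by norm_num)
  field_simp
  nlinarith [hs]

lemma key (β : ℝ) (hβ : 0 < β) (hne : Real.sinh (2*β) ≠ 1) :
    |1 - csch (2*β)| / Real.sqrt (coth (2*β) * Real.cosh (2*β) - 2)
      = 1 / Real.sqrt (Real.sinh (2*β)) := by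
  set s := Real.sinh (2*β) with hs
  have hspos : 0 < s := Real.sinh_pos_iff.2 (by linarith)
  have hc2 : Real.cosh (2*β) ^ 2 = 1 + s ^ 2 := by
    rw [Real.cosh_sq']
  have hexpr : coth (2*β) * Real.cosh (2*β) - 2 = (s - 1)^2 / s := by
    unfold coth
    rw [← hs]
    field_simp
    nlinarith [hc2]
  have hcsch : |1 - csch (2*β)| = |s - 1| / s := by
    unfold csch
    rw [← hs, show (1:ℝ) - 1/s = (s-1)/s by field_simp, abs_div, abs_of_pos hspos]
  have hsq : Real.sqrt s * Real.sqrt s = s := Real.mul_self_sqrt hspos.le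
  have hsqpos : 0 < Real.sqrt s := Real.sqrt_pos.2 hspos
  have habs : |s - 1| ≠ 0 := abs_ne_zero.mpr (sub_ne_zero.mpr hne)
  rw [hcsch, hexpr, Real.sqrt_div (sq_nonneg _), Real.sqrt_sq_eq_abs,
    div_div_div_comm, div_self habs, Real.div_sqrt]

/-- `lim_{β→β_c} |1 − csch(2β)| / √(coth(2β)·cosh(2β) − 2) = 1` where `β_c = ln(1+√2)/2`. -/
theorem stmt2 :
    Tendsto (fun β : ℝ =>
        |1 - csch (2 * β)| / Real.sqrt (coth (2 * β) * Real.cosh (2 * β) - 2))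
      (nhdsWithin betac {betac}ᶜ) (nhds 1) := by
  have hb : 0 < betac := by
    have h1 : (1:ℝ) < 1 + Real.sqrt 2 := by
      have := Real.sqrt_pos.2 (by norm_num : (0:ℝ) < 2); linarith
    have := Real.log_pos h1
    unfold betac; linarith
  have hlim : Tendsto (fun β : ℝ => 1 / Real.sqrt (Real.sinh (2*β)))
      (nhdsWithin betac {betac}ᶜ) (nhds 1) := by
    have hc : ContinuousAt (fun β : ℝ => 1 / Real.sqrt (Real.sinh (2*β))) betac := by
      apply ContinuousAt.div continuousAt_const
      · exact (Real.continuous_sqrt.comp (Real.continuous_sinh.comp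
          (continuous_const.mul continuous_id))).continuousAt
      · rw [sinh_two_betac, Real.sqrt_one]; norm_num
    have : (fun β : ℝ => 1 / Real.sqrt (Real.sinh (2*β))) betac = 1 := by
      simp [sinh_two_betac]
    simpa [this] using hc.tendsto.mono_left nhdsWithin_le_nhds
  apply hlim.congr'
  have h1 : ∀ᶠ β in nhdsWithin betac {betac}ᶜ, 0 < β :=
    eventually_nhdsWithin_of_eventually_nhds (eventually_gt_nhds hb)
  have h2 : ∀ᶠ β in nhdsWithin betac {betac}ᶜ, β ≠ betac :=
    eventually_mem_nhdsWithin.mono (fun x hx => hx)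
  filter_upwards [h1, h2] with β hβ hne
  refine (key β hβ ?_).symm
  intro h
  exact hne (by
    have := Real.sinh_injective (h.trans sinh_two_betac.symm)
    linarith)
end

section
/- For every β > 0 and every θ ∈ (0,π], csch(γ_θ(β)) ≤ 2/θ, where γ_θ(β) is the unique γ ≥ 0 with cosh(γ) = coth(2β)cosh(2β) − cos θ. -/
/-- For every `β > 0` and every `θ ∈ (0,π]`, `csch(γ_θ(β)) ≤ 2/θ`, where `γ_θ(β)` is the
unique `γ ≥ 0` with `cosh(γ) = coth(2β)cosh(2β) − cos θ`. -/
theorem stmt3 (β θ γ : ℝ) (hβ : 0 < β) (hθ : θ ∈ Set.Ioc 0 Real.pi)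
    (hγ0 : 0 ≤ γ)
    (hγ : Real.cosh γ = coth (2 * β) * Real.cosh (2 * β) - Real.cos θ) :
    csch γ ≤ 2 / θ := by
  obtain ⟨hθ0, hθπ⟩ := hθ
  have hs : 0 < Real.sinh (2 * β) := Real.sinh_pos_iff.2 (by linarith)
  have hcsq : Real.cosh (2 * β) ^ 2 = Real.sinh (2 * β) ^ 2 + 1 := Real.cosh_sq _
  have hge2 : 2 ≤ coth (2 * β) * Real.cosh (2 * β) := by
    rw [coth, div_mul_eq_mul_div, ← sq, hcsq, le_div_iff₀ hs]
    nlinarith [sq_nonneg (Real.sinh (2 * β) - 1)]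
  have hcoshγ : 2 - Real.cos θ ≤ Real.cosh γ := by linarith
  have hsin : θ / Real.pi ≤ Real.sin (θ / 2) := by
    have := Real.mul_le_sin (x := θ / 2) (by linarith) (by linarith)
    calc θ / Real.pi = 2 / Real.pi * (θ / 2) := by ring
    _ ≤ Real.sin (θ / 2) := this
  have hcos : 1 - Real.cos θ = 2 * Real.sin (θ / 2) ^ 2 := by
    have := Real.cos_two_mul (θ / 2)
    rw [show 2 * (θ / 2) = θ by ring] at this
    have h2 : Real.sin (θ / 2) ^ 2 + Real.cos (θ / 2) ^ 2 = 1 := Real.sin_sq_add_cos_sq _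
    linarith
  have hsinhγ : θ / 2 ≤ Real.sinh γ := by
    have hsg : 0 ≤ Real.sinh γ := Real.sinh_nonneg_iff.2 hγ0
    have hsq : Real.cosh γ ^ 2 = Real.sinh γ ^ 2 + 1 := Real.cosh_sq _
    have hπ : Real.pi ≤ 4 := by
      have := Real.pi_le_four; linarith
    have hθπ' : θ / Real.pi ≥ θ / 4 := by
      apply div_le_div_of_nonneg_left (by linarith) (by linarith) hπ
    nlinarith [sq_nonneg (Real.sinh γ - θ / 2), Real.pi_pos, sq_nonneg θ]
  have hpos : 0 < Real.sinh γ := lt_of_lt_of_le (by linarith) hsinhγ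
  rw [csch, div_le_div_iff₀ hpos hθ0]
  linarith
end

section
/- There exist constants C3, C4 in (0,∞) such that for all sufficiently large natural numbers N and all β > 0: ∑_{n=1}^{N} csch(γ_{θ_n}(β)) ≤ C3·N·ln N and ∑_{n=1}^{N} csch(γ_{θ_n}(β))² ≤ C4·N², where θ_n = π(2n−1)/(2N). -/
/-!
The hypothesis makes `cosh γ ≥ 2 - cos θ`, since `coth x · cosh x = (1 + sinh² x) / sinh x ≥ 2`.
Hence `sinh² γ = cosh² γ - 1 ≥ 2 (1 - cos θ) = 4 sin² (θ/2)`, and Jordan's inequality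
`sin (θ/2) ≥ θ/π` gives `csch γ_θ ≤ π / (2θ)`. At the node `θ_n` this is `N / (2n - 1) ≤ N / n`,
so the two sums are dominated by `N · H_N ≤ N (1 + log N)` and `N² ∑ 1/n² ≤ 2 N²`.
-/

open Filter Finset

open Real

lemma csch_nonneg {x : ℝ} (hx : 0 ≤ x) : 0 ≤ csch x :=
  one_div_nonneg.mpr (sinh_nonneg_iff.mpr hx)

lemma two_le_coth_mul_cosh {x : ℝ} (hx : 0 < x) : 2 ≤ coth x * cosh x := by
  have hs : 0 < sinh x := sinh_pos_iff.mpr hx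
  rw [coth, div_mul_eq_mul_div, le_div_iff₀ hs, ← sq, cosh_sq]
  nlinarith [sq_nonneg (sinh x - 1)]

lemma two_mul_sin_half_le_sinh {g θ : ℝ} (hg : 0 ≤ g) (h : 2 - cos θ ≤ cosh g) :
    2 * sin (θ / 2) ≤ sinh g := by
  have hcos : cos θ = 1 - 2 * sin (θ / 2) ^ 2 := by
    rw [← cos_two_mul_eq_one_sub, mul_div_cancel₀ _ two_ne_zero]
  have hsq : (2 * sin (θ / 2)) ^ 2 ≤ sinh g ^ 2 := by
    nlinarith [cosh_sq g, cos_le_one θ, neg_one_le_cos θ]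
  exact (le_abs_self _).trans (abs_le_of_sq_le_sq hsq (sinh_nonneg_iff.mpr hg))

lemma csch_le_pi_div_two_mul {g θ : ℝ} (hθ : θ ∈ Set.Ioc 0 π) (hg : 0 ≤ g)
    (h : 2 - cos θ ≤ cosh g) : csch g ≤ π / (2 * θ) := by
  obtain ⟨hθ0, hθπ⟩ := hθ
  have hjordan : 2 * θ / π ≤ 2 * sin (θ / 2) := by
    have := mul_le_sin (x := θ / 2) (by positivity) (by linarith)
    calc 2 * θ / π = 2 * (2 / π * (θ / 2)) := by ring
      _ ≤ 2 * sin (θ / 2) := by gcongr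
  have hlower := hjordan.trans (two_mul_sin_half_le_sinh hg h)
  calc csch g = 1 / sinh g := rfl
    _ ≤ 1 / (2 * θ / π) := one_div_le_one_div_of_le (by positivity) hlower
    _ = π / (2 * θ) := one_div_div _ _

lemma node_mem_Ioc {N n : ℕ} (hn : n ∈ Icc 1 N) :
    π * (2 * (n : ℝ) - 1) / (2 * N) ∈ Set.Ioc 0 π := by
  obtain ⟨h1, hN⟩ := mem_Icc.mp hn
  have h1' : (1 : ℝ) ≤ n := by exact_mod_cast h1
  have hN' : (n : ℝ) ≤ N := by exact_mod_cast hN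
  constructor
  · apply div_pos <;> nlinarith [pi_pos]
  · rw [div_le_iff₀ (by linarith)]
    nlinarith [pi_pos]

lemma pi_div_two_mul_node_le {N n : ℕ} (hn : n ∈ Icc 1 N) :
    π / (2 * (π * (2 * (n : ℝ) - 1) / (2 * N))) ≤ N / n := by
  obtain ⟨h1, hnN⟩ := mem_Icc.mp hn
  have h1' : (1 : ℝ) ≤ n := by exact_mod_cast h1
  have hN : (0 : ℝ) < N := by exact_mod_cast (by omega : 0 < N)
  have hnode : π / (2 * (π * (2 * (n : ℝ) - 1) / (2 * N))) = N / (2 * n - 1) := by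
    field_simp [pi_pos.ne', show (2 * (n : ℝ) - 1) ≠ 0 by linarith]
  rw [hnode]
  exact div_le_div_of_nonneg_left hN.le (by linarith) (by linarith)

lemma sum_Icc_div_le_mul_one_add_log (N : ℕ) :
    ∑ n ∈ Icc 1 N, (N : ℝ) / n ≤ N * (1 + log N) := by
  have hH := harmonic_le_one_add_log N
  rw [harmonic_eq_sum_Icc] at hH
  push_cast at hH
  simp_rw [div_eq_mul_inv, ← mul_sum]
  gcongr

lemma sum_Icc_div_sq_le (N : ℕ) : ∑ n ∈ Icc 1 N, ((N : ℝ) / n) ^ 2 ≤ 2 * N ^ 2 := by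
  have hp := sum_Ioo_inv_sq_le (α := ℝ) 0 (N + 1)
  rw [show Ioo 0 (N + 1) = Icc 1 N by ext; simp only [mem_Ioo, mem_Icc]; omega] at hp
  simp_rw [div_pow, div_eq_mul_inv, ← mul_sum, mul_comm (2 : ℝ)]
  gcongr
  simpa using hp

/-- There exist constants `C3, C4 ∈ (0,∞)` such that for all sufficiently large `N` and
all `β > 0`: `∑_{n=1}^{N} csch(γ_{θ_n}(β)) ≤ C3·N·ln N` and
`∑_{n=1}^{N} csch(γ_{θ_n}(β))² ≤ C4·N²`, where `θ_n = π(2n−1)/(2N)` and `γ_θ(β)` is the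
unique `γ ≥ 0` with `cosh γ = coth(2β)cosh(2β) − cos θ`. -/
theorem stmt4 (γ : ℝ → ℝ → ℝ)
    (hγ : ∀ β > (0 : ℝ), ∀ θ ∈ Set.Ioc 0 Real.pi,
      0 ≤ γ β θ ∧ Real.cosh (γ β θ) = coth (2 * β) * Real.cosh (2 * β) - Real.cos θ) :
    ∃ C3 C4 : ℝ, 0 < C3 ∧ 0 < C4 ∧ ∀ᶠ N : ℕ in atTop, ∀ β > (0 : ℝ),
      (∑ n ∈ Finset.Icc 1 N,
          csch (γ β (Real.pi * (2 * (n : ℝ) - 1) / (2 * N)))) ≤ C3 * N * Real.log N ∧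
      (∑ n ∈ Finset.Icc 1 N,
          (csch (γ β (Real.pi * (2 * (n : ℝ) - 1) / (2 * N)))) ^ 2) ≤ C4 * N ^ 2 := by
  refine ⟨2, 2, two_pos, two_pos, ?_⟩
  filter_upwards [eventually_ge_atTop 3] with N hN β hβ
  have hterm : ∀ n ∈ Icc 1 N, 0 ≤ csch (γ β (π * (2 * (n : ℝ) - 1) / (2 * N))) ∧
      csch (γ β (π * (2 * (n : ℝ) - 1) / (2 * N))) ≤ N / n := by
    intro n hn
    obtain ⟨hγ0, hcosh⟩ := hγ β hβ _ (node_mem_Ioc hn)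
    have hcoth := two_le_coth_mul_cosh (by linarith : 0 < 2 * β)
    exact ⟨csch_nonneg hγ0, (csch_le_pi_div_two_mul (node_mem_Ioc hn) hγ0 (by linarith)).trans
      (pi_div_two_mul_node_le hn)⟩
  have hlog : 1 ≤ log N := by
    rw [le_log_iff_exp_le (by positivity)]
    exact exp_one_lt_three.le.trans (by exact_mod_cast hN)
  constructor
  · calc _ ≤ ∑ n ∈ Icc 1 N, (N : ℝ) / n := sum_le_sum fun n hn ↦ (hterm n hn).2
      _ ≤ N * (1 + log N) := sum_Icc_div_le_mul_one_add_log N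
      _ ≤ 2 * N * log N := by nlinarith [Nat.cast_nonneg (α := ℝ) N]
  · calc _ ≤ ∑ n ∈ Icc 1 N, ((N : ℝ) / n) ^ 2 :=
          sum_le_sum fun n hn ↦ pow_le_pow_left₀ (hterm n hn).1 (hterm n hn).2 2
      _ ≤ 2 * N ^ 2 := sum_Icc_div_sq_le N
end

section
/- Suppose M : ℕ → (0,∞) satisfies lim_{N→∞} N(ln ln N)²/(M(N)·ln N) = 0. Then for all sufficiently large N, for every β in (β_c − 1/√(4M(N)·N·ln N), β_c + 1/√(4M(N)·N·ln N)) and every θ ∈ (0,π], one has |(1 − csch(2β))·csch(γ_θ(β))| ≤ √2, where β_c = ln(1+√2)/2 and γ_θ(β) is the unique γ ≥ 0 with cosh(γ) = coth(2β)cosh(2β) − cos θ. -/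
open Filter

/-!
Writing `s = sinh(2β) > 0`, the defining relation reads `cosh γ = s + s⁻¹ - cos θ ≥ s + s⁻¹ - 1`,
so `sinh² γ ≥ (s + s⁻¹ - 1)² - 1 = (1 + s²)(1 - s⁻¹)² ≥ (1 - csch(2β))²`. Hence the quantity is
at most `1` in absolute value for every `β > 0`, and the window around `β_c` lies in `β > 0` once
its radius, which tends to `0` by the growth condition on `M`, drops below `β_c`.
-/

lemma coth_mul_cosh (x : ℝ) : coth x * Real.cosh x = Real.sinh x + csch x := by
  rcases eq_or_ne (Real.sinh x) 0 with h | h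
  · simp [coth, csch, h]
  · rw [coth, csch]
    field_simp
    linear_combination Real.cosh_sq x

lemma one_sub_inv_sq_le {s : ℝ} (hs : 0 < s) : (1 - s⁻¹) ^ 2 ≤ (s + s⁻¹ - 1) ^ 2 - 1 := by
  have key : (s + s⁻¹ - 1) ^ 2 - 1 = (1 + s ^ 2) * (1 - s⁻¹) ^ 2 := by
    field_simp
    ring
  rw [key]
  exact le_mul_of_one_le_left (sq_nonneg _) (by nlinarith)

lemma abs_one_sub_csch_le_abs_sinh {b g c : ℝ} (hb : 0 < b) (hc : c ≤ 1)
    (h : Real.cosh g = coth b * Real.cosh b - c) : |1 - csch b| ≤ |Real.sinh g| := by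
  set s := Real.sinh b
  have hs : 0 < s := Real.sinh_pos_iff.mpr hb
  have hcsch : csch b = s⁻¹ := one_div s
  have hlow : s + s⁻¹ - 1 ≤ Real.cosh g := by
    rw [h, coth_mul_cosh, hcsch]
    linarith
  have hlow_nonneg : 0 ≤ s + s⁻¹ - 1 := by
    rw [show s + s⁻¹ - 1 = ((s - 1) ^ 2 + s) / s by field_simp; ring]
    positivity
  rw [← sq_le_sq, hcsch, Real.sinh_sq]
  calc (1 - s⁻¹) ^ 2 ≤ (s + s⁻¹ - 1) ^ 2 - 1 := one_sub_inv_sq_le hs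
    _ ≤ Real.cosh g ^ 2 - 1 := by gcongr

lemma abs_mul_csch_le_one {a g : ℝ} (h : |a| ≤ |Real.sinh g|) : |a * csch g| ≤ 1 := by
  rw [csch, mul_one_div, abs_div]
  exact div_le_one_of_le₀ h (abs_nonneg _)

lemma abs_one_sub_csch_mul_csch_le_one {b g c : ℝ} (hb : 0 < b) (hc : c ≤ 1)
    (h : Real.cosh g = coth b * Real.cosh b - c) : |(1 - csch b) * csch g| ≤ 1 :=
  abs_mul_csch_le_one (abs_one_sub_csch_le_abs_sinh hb hc h)

lemma betac_pos : 0 < betac := by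
  unfold betac
  have : 1 < 1 + Real.sqrt 2 := by linarith [Real.sqrt_pos.mpr (two_pos : (0 : ℝ) < 2)]
  exact half_pos (Real.log_pos this)

lemma tendsto_atTop_of_tendsto_div_zero {α : Type*} {l : Filter α} {f g : α → ℝ}
    (hf : Tendsto f l atTop) (hg : ∀ᶠ x in l, 0 < g x)
    (h : Tendsto (fun x => f x / g x) l (nhds 0)) : Tendsto g l atTop := by
  refine tendsto_atTop_mono' l ?_ hf
  filter_upwards [hg, h.eventually (eventually_lt_nhds one_pos)] with x hgx hx
  exact ((div_lt_one hgx).mp hx).le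

lemma tendsto_mul_log_of_tendsto_div_zero (M : ℕ → ℝ) (hMpos : ∀ N, 0 < M N)
    (hM : Tendsto (fun N : ℕ =>
        (N : ℝ) * (Real.log (Real.log N)) ^ 2 / (M N * Real.log N)) atTop (nhds 0)) :
    Tendsto (fun N : ℕ => M N * Real.log N) atTop atTop := by
  have hN : Tendsto (fun N : ℕ => (N : ℝ)) atTop atTop := tendsto_natCast_atTop_atTop
  have hloglog : Tendsto (fun N : ℕ => Real.log (Real.log N) ^ 2) atTop atTop :=
    (tendsto_pow_atTop two_ne_zero).comp
      (Real.tendsto_log_atTop.comp (Real.tendsto_log_atTop.comp hN))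
  refine tendsto_atTop_of_tendsto_div_zero (hN.atTop_mul_atTop₀ hloglog) ?_ hM
  filter_upwards [eventually_gt_atTop 1] with N hN1
  exact mul_pos (hMpos N) (Real.log_pos (by exact_mod_cast hN1))

/-- Suppose `M : ℕ → (0,∞)` satisfies `N(ln ln N)²/(M(N)·ln N) → 0`. Then for all large `N`,
for every `β ∈ (β_c − 1/√(4M(N)N ln N), β_c + 1/√(4M(N)N ln N))` and every `θ ∈ (0,π]`,
`|(1 − csch(2β))·csch(γ_θ(β))| ≤ √2`, where `γ_θ(β)` is the unique `γ ≥ 0` with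
`cosh γ = coth(2β)cosh(2β) − cos θ`. -/
theorem stmt6 (M : ℕ → ℝ) (hMpos : ∀ N, 0 < M N)
    (hM : Tendsto (fun N : ℕ =>
        (N : ℝ) * (Real.log (Real.log N)) ^ 2 / (M N * Real.log N)) atTop (nhds 0))
    (γ : ℝ → ℝ → ℝ)
    (hγ : ∀ β > (0 : ℝ), ∀ θ ∈ Set.Ioc 0 Real.pi,
      0 ≤ γ β θ ∧ Real.cosh (γ β θ) = coth (2 * β) * Real.cosh (2 * β) - Real.cos θ) :
    ∀ᶠ N : ℕ in atTop,
      ∀ β ∈ Set.Ioo (betac - 1 / Real.sqrt (4 * M N * N * Real.log N))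
          (betac + 1 / Real.sqrt (4 * M N * N * Real.log N)),
        ∀ θ ∈ Set.Ioc 0 Real.pi,
          |(1 - csch (2 * β)) * csch (γ β θ)| ≤ Real.sqrt 2 := by
  have hscale : Tendsto (fun N : ℕ => 4 * M N * N * Real.log N) atTop atTop := by
    refine ((tendsto_natCast_atTop_atTop.const_mul_atTop four_pos).atTop_mul_atTop₀
      (tendsto_mul_log_of_tendsto_div_zero M hMpos hM)).congr fun N => ?_
    ring
  have hradius :
      Tendsto (fun N : ℕ => 1 / Real.sqrt (4 * M N * N * Real.log N)) atTop (nhds 0) := by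
    simpa only [one_div, Function.comp_def] using
      tendsto_inv_atTop_zero.comp (Real.tendsto_sqrt_atTop.comp hscale)
  filter_upwards [hradius.eventually (eventually_lt_nhds betac_pos)] with N hN β hβ θ hθ
  have hβ : 0 < β := by linarith [hβ.1]
  exact (abs_one_sub_csch_mul_csch_le_one (by positivity) (Real.cos_le_one θ)
    (hγ β hβ θ hθ).2).trans Real.one_lt_sqrt_two.le
end

section
/- Suppose M : ℕ → (0,∞) satisfies lim_{N→∞} N(ln ln N)²/(M(N)·ln N) = 0. Then for all sufficiently large N, for every β in (β_c − 1/√(4M(N)·N·ln N), β_c + 1/√(4M(N)·N·ln N)) and every θ ∈ (0,π], one has |(csch(2β) − cos θ)·csch(γ_θ(β))| ≤ 3, where β_c = ln(1+√2)/2 and γ_θ(β) is the unique γ ≥ 0 with cosh(γ) = coth(2β)cosh(2β) − cos θ. -/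
open Filter

lemma key_poly (s w : ℝ) (hs : 0 < s) (hw1 : -1 ≤ w) (hw2 : w ≤ 1) :
    (1 - s*w)^2 ≤ 9*((s^2+1-w*s)^2 - s^2) := by
  nlinarith [sq_nonneg (s-1), sq_nonneg (s*(1-w)), sq_nonneg (s+1), mul_pos hs hs,
    mul_nonneg hs.le (sub_nonneg.mpr hw2), sq_nonneg (s^2+1-w*s-s), sq_nonneg (1-s*w),
    mul_nonneg (mul_nonneg hs.le hs.le) (sub_nonneg.mpr hw2)]

lemma key_s7 (β θ g : ℝ) (hβ : 0 < β) (hθ1 : 0 < θ) (hθ2 : θ ≤ Real.pi)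
    (hg0 : 0 ≤ g) (hgc : Real.cosh g = coth (2*β) * Real.cosh (2*β) - Real.cos θ) :
    |(csch (2*β) - Real.cos θ) * csch g| ≤ 3 := by
  unfold csch
  set s := Real.sinh (2*β) with hs
  have hspos : 0 < s := Real.sinh_pos_iff.mpr (by linarith)
  set w := Real.cos θ with hwdef
  have hw1 : -1 ≤ w := Real.neg_one_le_cos θ
  have hw2 : w < 1 := by
    have h := Real.cos_lt_cos_of_nonneg_of_le_pi le_rfl hθ2 hθ1
    rwa [Real.cos_zero] at h
  have hcosh2 : Real.cosh (2*β)^2 = s^2 + 1 := by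
    rw [Real.cosh_sq]
  set c := Real.cosh g with hcdef
  set t := Real.sinh g with htdef
  have ht0 : 0 ≤ t := Real.sinh_nonneg_iff.mpr hg0
  have hts : t^2 = c^2 - 1 := by
    have := Real.cosh_sq_sub_sinh_sq g; linarith
  have hc' : c * s = s^2 + 1 - w * s := by
    rw [hgc]; unfold coth; field_simp; nlinarith [hcosh2]
  have hcgt : 1 < c := by nlinarith [sq_nonneg (s-1), mul_pos hspos (sub_pos.mpr hw2)]
  have htpos : 0 < t := by nlinarith
  have hmain : |1/s - w| ≤ 3 * t := by
    have hsq : (1 - s*w)^2 ≤ (3*(s*t))^2 := by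
      have h9 : (3*(s*t))^2 = 9*((s^2+1-w*s)^2 - s^2) := by rw [← hc']; linear_combination (9*s^2) * hts
      rw [h9]; exact key_poly s w hspos hw1 hw2.le
    have habs : |1 - s*w| ≤ 3*(s*t) := by
      nlinarith [abs_nonneg (1-s*w), sq_abs (1-s*w), mul_pos (mul_pos hspos htpos) (by norm_num : (0:ℝ) < 3)]
    have heq : 1/s - w = (1 - s*w)/s := by field_simp
    rw [heq, abs_div, abs_of_pos hspos, div_le_iff₀ hspos]
    linarith [habs]
  rw [abs_mul, abs_of_pos (by positivity : (0:ℝ) < 1/t), mul_one_div, div_le_iff₀ htpos]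
  linarith

lemma betac_ge : (1/4 : ℝ) ≤ betac := by
  have he : Real.exp (1/2) * Real.exp (1/2) = Real.exp 1 := by
    rw [← Real.exp_add]; norm_num
  have h2 : Real.exp (1/2) ≤ 2 := by
    nlinarith [Real.exp_one_lt_d9, Real.exp_pos (1/2 : ℝ)]
  have hsqrt : (1:ℝ) ≤ Real.sqrt 2 := by
    rw [show (1:ℝ) = Real.sqrt 1 from (Real.sqrt_one).symm]
    exact Real.sqrt_le_sqrt (by norm_num)
  have hlog : (1/2 : ℝ) ≤ Real.log (1 + Real.sqrt 2) := by
    rw [Real.le_log_iff_exp_le (by linarith)]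
    linarith
  unfold betac; linarith

/-- Suppose `M : ℕ → (0,∞)` satisfies `N(ln ln N)²/(M(N)·ln N) → 0`. Then for all large `N`,
for every `β ∈ (β_c − 1/√(4M(N)N ln N), β_c + 1/√(4M(N)N ln N))` and every `θ ∈ (0,π]`,
`|(csch(2β) − cos θ)·csch(γ_θ(β))| ≤ 3`, where `γ_θ(β)` is the unique `γ ≥ 0` with
`cosh γ = coth(2β)cosh(2β) − cos θ`. -/
theorem stmt7 (M : ℕ → ℝ) (hMpos : ∀ N, 0 < M N)
    (hM : Tendsto (fun N : ℕ =>
        (N : ℝ) * (Real.log (Real.log N)) ^ 2 / (M N * Real.log N)) atTop (nhds 0))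
    (γ : ℝ → ℝ → ℝ)
    (hγ : ∀ β > (0 : ℝ), ∀ θ ∈ Set.Ioc 0 Real.pi,
      0 ≤ γ β θ ∧ Real.cosh (γ β θ) = coth (2 * β) * Real.cosh (2 * β) - Real.cos θ) :
    ∀ᶠ N : ℕ in atTop,
      ∀ β ∈ Set.Ioo (betac - 1 / Real.sqrt (4 * M N * N * Real.log N))
          (betac + 1 / Real.sqrt (4 * M N * N * Real.log N)),
        ∀ θ ∈ Set.Ioc 0 Real.pi,
          |(csch (2 * β) - Real.cos θ) * csch (γ β θ)| ≤ 3 := by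
  have h1 := hM.eventually (Iio_mem_nhds (by norm_num : (0:ℝ) < 1))
  filter_upwards [h1, eventually_ge_atTop 55] with N hr hN
  intro β hβ θ hθ
  have hN1 : (55:ℝ) ≤ N := by exact_mod_cast hN
  have hlog32 : Real.log 32 = 5 * Real.log 2 := by
    rw [show (32:ℝ) = 2^5 by norm_num, Real.log_pow]; norm_num
  have hlogN : Real.exp 1 ≤ Real.log N := by
    have h := Real.log_le_log (by norm_num : (0:ℝ) < 32) (by linarith : (32:ℝ) ≤ N)
    rw [hlog32] at h
    linarith [Real.log_two_gt_d9, Real.exp_one_lt_d9]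
  have hlogpos : 0 < Real.log N := lt_of_lt_of_le (Real.exp_pos 1) hlogN
  have hlnln : 1 ≤ Real.log (Real.log N) := (Real.le_log_iff_exp_le hlogpos).mpr hlogN
  have hden : 0 < M N * Real.log N := mul_pos (hMpos N) hlogpos
  have hlt : (N:ℝ) * (Real.log (Real.log N)) ^ 2 < M N * Real.log N :=
    (div_lt_one hden).mp hr
  have hsq1 : 1 ≤ (Real.log (Real.log N)) ^ 2 := by nlinarith
  have hMlog : (N:ℝ) ≤ M N * Real.log N := by
    nlinarith [mul_le_mul_of_nonneg_left hsq1 (by positivity : (0:ℝ) ≤ (N:ℝ))]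
  have hbig : (10000:ℝ) ≤ 4 * M N * N * Real.log N := by nlinarith
  have hsq : (100:ℝ) ≤ Real.sqrt (4 * M N * N * Real.log N) := by
    have h100 : Real.sqrt 10000 = 100 := by
      rw [show (10000:ℝ) = 100^2 by norm_num, Real.sqrt_sq (by norm_num)]
    calc (100:ℝ) = Real.sqrt 10000 := h100.symm
    _ ≤ _ := Real.sqrt_le_sqrt hbig
  have hε : 1 / Real.sqrt (4 * M N * N * Real.log N) ≤ 1/100 :=
    one_div_le_one_div_of_le (by norm_num) hsq
  have hβpos : 0 < β := by
    have := hβ.1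
    linarith [betac_ge]
  obtain ⟨hg0, hgc⟩ := hγ β hβpos θ hθ
  exact key_s7 β θ (γ β θ) hβpos hθ.1 hθ.2 hg0 hgc
end

section
/- Suppose M : ℕ → (0,∞) satisfies lim_{N→∞} N(ln ln N)²/(M(N)·ln N) = 0. Then there exist constants C9, C10 in (0,∞) such that for all sufficiently large N and all β > 0: ∑_{n=1}^{N} e^{−4M(N)·γ_{θ_n}(β)}·θ_n^{−1} ≤ C9·N·ln ln N, and ∑_{n=1}^{N} e^{−4M(N)·γ_{θ_n}(β)}·csch(γ_{θ_n}(β)) ≤ C10·N·ln ln N, where θ_n = π(2n−1)/(2N). -/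
/-! Since `coth(2β) cosh(2β) ≥ 2`, the defining equation gives
`cosh γ ≥ 2 - cos θ ≥ 1 + 2θ²/π²`, i.e. `sinh(γ/2) ≥ θ/π`; hence `γ ≥ θ/5` and
`sinh γ ≥ 2θ/π` uniformly in `β`. Both sums are therefore dominated by `∑ e^{-aθₙ}/θₙ`
with `a = 4M/5`. Split this sum at `K = ⌈ln N⌉`: the first `K` terms contribute at most
`(2N/π)(1 + ln K)` by the harmonic bound, and in the tail `e^{-aθ} ≤ 1/(aθ)` leaves
`∑_{n>K} 4N²/(aπ²n²) ≤ 4N²/(aπ²K)`, which the growth condition on `M` makes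
`O(N ln ln N)`. -/
open Filter Finset

open Real

lemma sinh_le_mul_exp (y : ℝ) : sinh y ≤ y * exp y := by
  have h : 1 - 2 * y ≤ exp (-(2 * y)) := by linarith [add_one_le_exp (-(2 * y))]
  have hexp : exp (-(2 * y)) = exp (-y) * exp (-y) := by rw [← exp_add]; ring_nf
  have hinv : exp y * exp (-y) = 1 := by rw [← exp_add, add_neg_cancel, exp_zero]
  rw [sinh_eq]
  nlinarith [exp_pos y, exp_pos (-y)]

lemma two_mul_div_three_le_of_le_sinh_half {g t : ℝ} (hg : 0 ≤ g) (ht : t ≤ 1)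
    (h : t ≤ sinh (g / 2)) : 2 * t / 3 ≤ g := by
  rcases le_or_gt g 2 with hg2 | hg2
  · have he : exp (g / 2) ≤ 3 := (exp_le_exp.2 (by linarith)).trans
      (by linarith [exp_one_lt_d9] : exp 1 ≤ 3)
    nlinarith [sinh_le_mul_exp (g / 2)]
  · linarith

lemma div_pi_le_sinh_half_of_two_sub_cos_le_cosh {θ g : ℝ} (hθ : θ ∈ Set.Ioc 0 π)
    (hg : 0 ≤ g) (h : 2 - cos θ ≤ cosh g) : θ / π ≤ sinh (g / 2) := by
  have hcos : cos θ ≤ 1 - 2 / π ^ 2 * θ ^ 2 :=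
    cos_le_one_sub_mul_cos_sq (by rw [abs_of_pos hθ.1]; exact hθ.2)
  have hcosh : cosh g = 1 + 2 * sinh (g / 2) ^ 2 := by
    conv_lhs => rw [← add_halves g]
    rw [cosh_add, ← sq, ← sq, cosh_sq]
    ring
  have hsq : (θ / π) ^ 2 ≤ sinh (g / 2) ^ 2 := by
    have : 2 / π ^ 2 * θ ^ 2 = 2 * (θ / π) ^ 2 := by ring
    nlinarith
  have hθπ : 0 ≤ θ / π := div_nonneg hθ.1.le pi_pos.le
  exact (pow_le_pow_iff_left₀ hθπ (sinh_nonneg_iff.2 (by linarith)) two_ne_zero).1 hsq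

lemma div_five_le_of_two_sub_cos_le_cosh {θ g : ℝ} (hθ : θ ∈ Set.Ioc 0 π) (hg : 0 ≤ g)
    (h : 2 - cos θ ≤ cosh g) : θ / 5 ≤ g := by
  have hθπ : θ / π ≤ 1 := (div_le_one pi_pos).2 hθ.2
  have := two_mul_div_three_le_of_le_sinh_half hg hθπ
    (div_pi_le_sinh_half_of_two_sub_cos_le_cosh hθ hg h)
  have h15 : θ / 5 ≤ 2 * (θ / π) / 3 := by
    rw [div_le_iff₀ (by norm_num), mul_div_assoc', div_div, div_mul_eq_mul_div,
      le_div_iff₀ (by positivity)]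
    nlinarith [pi_lt_d2, hθ.1]
  linarith

lemma two_mul_div_pi_le_sinh_of_two_sub_cos_le_cosh {θ g : ℝ} (hθ : θ ∈ Set.Ioc 0 π)
    (hg : 0 ≤ g) (h : 2 - cos θ ≤ cosh g) : 2 * θ / π ≤ sinh g := by
  have hs := div_pi_le_sinh_half_of_two_sub_cos_le_cosh hθ hg h
  have hsinh : sinh g = 2 * sinh (g / 2) * cosh (g / 2) := by
    rw [← sinh_two_mul, mul_div_cancel₀ g two_ne_zero]
  rw [hsinh, mul_div_assoc]
  nlinarith [one_le_cosh (g / 2), div_nonneg hθ.1.le pi_pos.le]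

noncomputable def chebyshevAngle (N n : ℕ) : ℝ := π * (2 * n - 1) / (2 * N)

lemma chebyshevAngle_mem_Ioc {N n : ℕ} (h1 : 1 ≤ n) (hn : n ≤ N) :
    chebyshevAngle N n ∈ Set.Ioc 0 π := by
  have h1' : (1 : ℝ) ≤ n := by exact_mod_cast h1
  have hn' : (n : ℝ) ≤ N := by exact_mod_cast hn
  rw [chebyshevAngle, Set.mem_Ioc, lt_div_iff₀ (by linarith), div_le_iff₀ (by linarith)]
  constructor <;>
  nlinarith [pi_pos]

lemma pi_mul_div_le_chebyshevAngle {N n : ℕ} (h1 : 1 ≤ n) :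
    π * n / (2 * N) ≤ chebyshevAngle N n := by
  have h1' : (1 : ℝ) ≤ n := by exact_mod_cast h1
  unfold chebyshevAngle
  gcongr
  linarith

lemma sum_Icc_inv_chebyshevAngle_le (N K : ℕ) :
    ∑ n ∈ Icc 1 K, (chebyshevAngle N n)⁻¹ ≤ 2 * N / π * (1 + log K) := by
  rcases Nat.eq_zero_or_pos N with rfl | hN
  · simp [chebyshevAngle]
  have hharm : ∑ n ∈ Icc 1 K, ((n : ℝ))⁻¹ ≤ 1 + log K := by
    simpa [harmonic_eq_sum_Icc] using harmonic_le_one_add_log K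
  calc ∑ n ∈ Icc 1 K, (chebyshevAngle N n)⁻¹
      ≤ ∑ n ∈ Icc 1 K, 2 * N / π * ((n : ℝ))⁻¹ := by
        refine sum_le_sum fun n hn ↦ ?_
        have hn1 : (0 : ℝ) < n := by exact_mod_cast (mem_Icc.1 hn).1
        calc (chebyshevAngle N n)⁻¹ ≤ (π * n / (2 * N))⁻¹ :=
              inv_anti₀ (by positivity) (pi_mul_div_le_chebyshevAngle (mem_Icc.1 hn).1)
          _ = 2 * N / π * ((n : ℝ))⁻¹ := by field_simp
    _ = 2 * N / π * ∑ n ∈ Icc 1 K, ((n : ℝ))⁻¹ := (mul_sum ..).symm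
    _ ≤ 2 * N / π * (1 + log K) := by gcongr

lemma exp_neg_le_inv {x : ℝ} (hx : 0 < x) : exp (-x) ≤ x⁻¹ := by
  rw [exp_neg]
  exact inv_anti₀ hx (by linarith [add_one_le_exp x])

lemma sum_Ioc_exp_neg_mul_chebyshevAngle_le {a : ℝ} (ha : 0 < a) {K N : ℕ} (hK : K ≠ 0)
    (hKN : K ≤ N) :
    ∑ n ∈ Ioc K N, exp (-(a * chebyshevAngle N n)) * (chebyshevAngle N n)⁻¹
      ≤ 4 * N ^ 2 / (a * π ^ 2) * (K : ℝ)⁻¹ := by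
  calc ∑ n ∈ Ioc K N, exp (-(a * chebyshevAngle N n)) * (chebyshevAngle N n)⁻¹
      ≤ ∑ n ∈ Ioc K N, 4 * N ^ 2 / (a * π ^ 2) * ((n : ℝ) ^ 2)⁻¹ := by
        refine sum_le_sum fun n hn ↦ ?_
        obtain ⟨hKn, hnN⟩ := mem_Ioc.1 hn
        have hθ := chebyshevAngle_mem_Ioc (by omega) hnN
        have hθn := pi_mul_div_le_chebyshevAngle (N := N) (n := n) (by omega)
        have hn0 : (0 : ℝ) < n := by exact_mod_cast (by omega : 0 < n)
        have hN0 : (0 : ℝ) < N := by exact_mod_cast (by omega : 0 < N)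
        calc exp (-(a * chebyshevAngle N n)) * (chebyshevAngle N n)⁻¹
            ≤ (a * chebyshevAngle N n)⁻¹ * (chebyshevAngle N n)⁻¹ := by
              exact mul_le_mul_of_nonneg_right (exp_neg_le_inv (mul_pos ha hθ.1))
                (inv_nonneg.2 hθ.1.le)
          _ = a⁻¹ * ((chebyshevAngle N n)⁻¹) ^ 2 := by ring
          _ ≤ a⁻¹ * ((π * n / (2 * N))⁻¹) ^ 2 := by
              gcongr _ * ?_ ^ 2
              · exact inv_nonneg.2 hθ.1.le
              · exact inv_anti₀ (by positivity) hθn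
          _ = 4 * N ^ 2 / (a * π ^ 2) * ((n : ℝ) ^ 2)⁻¹ := by field_simp; ring
    _ = 4 * N ^ 2 / (a * π ^ 2) * ∑ n ∈ Ioc K N, ((n : ℝ) ^ 2)⁻¹ := (mul_sum ..).symm
    _ ≤ 4 * N ^ 2 / (a * π ^ 2) * (K : ℝ)⁻¹ := by
        gcongr
        exact (sum_Ioc_inv_sq_le_sub hK hKN).trans (sub_le_self _ (by positivity))

lemma sum_exp_neg_mul_chebyshevAngle_le {a : ℝ} (ha : 0 < a) {K N : ℕ} (hK : K ≠ 0)
    (hKN : K ≤ N) :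
    ∑ n ∈ Icc 1 N, exp (-(a * chebyshevAngle N n)) * (chebyshevAngle N n)⁻¹
      ≤ 2 * N / π * (1 + log K) + 4 * N ^ 2 / (a * π ^ 2) * (K : ℝ)⁻¹ := by
  have hhead : ∑ n ∈ Icc 1 K, exp (-(a * chebyshevAngle N n)) * (chebyshevAngle N n)⁻¹
      ≤ ∑ n ∈ Icc 1 K, (chebyshevAngle N n)⁻¹ := by
    refine sum_le_sum fun n hn ↦ ?_
    have hθ := chebyshevAngle_mem_Ioc (mem_Icc.1 hn).1 ((mem_Icc.1 hn).2.trans hKN)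
    have : exp (-(a * chebyshevAngle N n)) ≤ 1 := exp_le_one_iff.2 (by nlinarith [hθ.1])
    exact mul_le_of_le_one_left (inv_nonneg.2 hθ.1.le) this
  have hIcc : ∀ m : ℕ, Icc 1 m = Ioc 0 m := fun m ↦ by
    ext; simp only [mem_Icc, mem_Ioc]; omega
  rw [hIcc, ← sum_Ioc_consecutive _ (Nat.zero_le K) hKN, ← hIcc]
  exact add_le_add (hhead.trans (sum_Icc_inv_chebyshevAngle_le N K))
    (sum_Ioc_exp_neg_mul_chebyshevAngle_le ha hK hKN)

lemma log_natCeil_le_two_mul_log {x : ℝ} (hx : 2 ≤ x) : log ⌈x⌉₊ ≤ 2 * log x := by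
  have hceil : (⌈x⌉₊ : ℝ) ≤ x ^ 2 := by
    nlinarith [Nat.ceil_lt_add_one (by linarith : 0 ≤ x)]
  have hpos : (0 : ℝ) < ⌈x⌉₊ := Nat.cast_pos.2 (Nat.ceil_pos.2 (by linarith))
  calc log ⌈x⌉₊ ≤ log (x ^ 2) := log_le_log hpos hceil
    _ = 2 * log x := by rw [log_pow]; norm_num

lemma sum_exp_neg_mul_chebyshevAngle_le_log_log {a : ℝ} (ha : 0 < a) {N : ℕ}
    (hL : 1 ≤ log (log N)) (hratio : N * log (log N) ^ 2 ≤ 2 * a * log N) :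
    ∑ n ∈ Icc 1 N, exp (-(a * chebyshevAngle N n)) * (chebyshevAngle N n)⁻¹
      ≤ 3 * N * log (log N) := by
  set L := log (log N)
  have hlogN : 2 ≤ log N := by
    have hpos : 0 < log N := by
      refine (log_natCast_nonneg N).lt_of_ne fun h ↦ ?_
      norm_num [L, ← h] at hL
    linarith [(le_log_iff_exp_le hpos).1 hL, exp_one_gt_d9]
  have hN : (0 : ℝ) < N := by
    rcases Nat.eq_zero_or_pos N with h | h
    · simp [h] at hlogN; linarith
    · exact_mod_cast h
  set K := ⌈log N⌉₊
  have hK : K ≠ 0 := (Nat.ceil_pos.2 (by linarith)).ne'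
  have hKN : K ≤ N := Nat.ceil_le.2 (log_le_self hN.le)
  have hlogK : log K ≤ 2 * L := log_natCeil_le_two_mul_log hlogN
  have hhead : 2 * N / π * (1 + log K) ≤ 2 * N * L := by
    have h : 1 + log K ≤ π * L := by nlinarith [pi_gt_three]
    rw [div_mul_eq_mul_div, div_le_iff₀ pi_pos]
    nlinarith
  have htail : 4 * N ^ 2 / (a * π ^ 2) * (K : ℝ)⁻¹ ≤ N * L := by
    have hxK : log N ≤ K := Nat.le_ceil _
    have haK : N * L ^ 2 ≤ 2 * (a * K) := by nlinarith
    have hπ : 9 ≤ π ^ 2 := by nlinarith [pi_gt_three]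
    rw [← div_eq_mul_inv, div_div, div_le_iff₀ (by positivity)]
    calc 4 * (N : ℝ) ^ 2 ≤ 9 * N * (N * L ^ 2) / 2 := by
          have hL2 : 1 ≤ L ^ 2 := one_le_pow₀ hL
          nlinarith [mul_le_mul_of_nonneg_left hL2 (sq_nonneg (N : ℝ))]
      _ ≤ π ^ 2 * N * (2 * (a * K)) / 2 := by gcongr
      _ ≤ N * L * (a * π ^ 2 * K) := by
          nlinarith [mul_le_mul_of_nonneg_left hL (by positivity : 0 ≤ π ^ 2 * N * (a * K))]
  linarith [sum_exp_neg_mul_chebyshevAngle_le ha hK hKN]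

lemma two_sub_cos_le_cosh_of_cosh_eq {β θ g : ℝ} (hβ : 0 < β)
    (h : cosh g = coth (2 * β) * cosh (2 * β) - cos θ) : 2 - cos θ ≤ cosh g := by
  linarith [two_le_coth_mul_cosh (by linarith : 0 < 2 * β)]

lemma exp_neg_mul_le_of_two_sub_cos_le_cosh {θ g m : ℝ} (hθ : θ ∈ Set.Ioc 0 π)
    (hg : 0 ≤ g) (h : 2 - cos θ ≤ cosh g) (hm : 0 ≤ m) :
    exp (-(4 * m) * g) ≤ exp (-(4 * m / 5 * θ)) := by
  have := div_five_le_of_two_sub_cos_le_cosh hθ hg h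
  exact exp_le_exp.2 (by nlinarith)

lemma exp_neg_mul_mul_csch_le_of_two_sub_cos_le_cosh {θ g m : ℝ} (hθ : θ ∈ Set.Ioc 0 π)
    (hg : 0 ≤ g) (h : 2 - cos θ ≤ cosh g) (hm : 0 ≤ m) :
    exp (-(4 * m) * g) * csch g ≤ π / 2 * (exp (-(4 * m / 5 * θ)) * θ⁻¹) := by
  have hsinh := two_mul_div_pi_le_sinh_of_two_sub_cos_le_cosh hθ hg h
  have hθ2 : 0 < 2 * θ / π := div_pos (by linarith [hθ.1]) pi_pos
  have hcsch : csch g ≤ π / 2 * θ⁻¹ := by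
    calc csch g ≤ 1 / (2 * θ / π) := one_div_le_one_div_of_le hθ2 hsinh
      _ = π / 2 * θ⁻¹ := by field_simp
  calc exp (-(4 * m) * g) * csch g ≤ exp (-(4 * m / 5 * θ)) * (π / 2 * θ⁻¹) :=
        mul_le_mul (exp_neg_mul_le_of_two_sub_cos_le_cosh hθ hg h hm) hcsch
          (one_div_nonneg.2 (hθ2.le.trans hsinh)) (exp_pos _).le
    _ = π / 2 * (exp (-(4 * m / 5 * θ)) * θ⁻¹) := by ring

/-- Suppose `M : ℕ → (0,∞)` satisfies `N(ln ln N)²/(M(N)·ln N) → 0`. Then there exist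
`C9, C10 ∈ (0,∞)` such that for all large `N` and all `β > 0`:
`∑_{n=1}^{N} e^{−4M(N)γ_{θ_n}(β)} θ_n^{−1} ≤ C9 N ln ln N` and
`∑_{n=1}^{N} e^{−4M(N)γ_{θ_n}(β)} csch(γ_{θ_n}(β)) ≤ C10 N ln ln N`,
where `θ_n = π(2n−1)/(2N)` and `γ_θ(β)` is the unique `γ ≥ 0` with
`cosh γ = coth(2β)cosh(2β) − cos θ`. -/
theorem stmt8 (M : ℕ → ℝ) (hMpos : ∀ N, 0 < M N)
    (hM : Tendsto (fun N : ℕ =>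
        (N : ℝ) * (Real.log (Real.log N)) ^ 2 / (M N * Real.log N)) atTop (nhds 0))
    (γ : ℝ → ℝ → ℝ)
    (hγ : ∀ β > (0 : ℝ), ∀ θ ∈ Set.Ioc 0 Real.pi,
      0 ≤ γ β θ ∧ Real.cosh (γ β θ) = coth (2 * β) * Real.cosh (2 * β) - Real.cos θ) :
    ∃ C9 C10 : ℝ, 0 < C9 ∧ 0 < C10 ∧ ∀ᶠ N : ℕ in atTop, ∀ β > (0 : ℝ),
      (∑ n ∈ Finset.Icc 1 N,
          Real.exp (-(4 * M N) * γ β (Real.pi * (2 * (n : ℝ) - 1) / (2 * N))) *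
            (Real.pi * (2 * (n : ℝ) - 1) / (2 * N))⁻¹)
        ≤ C9 * N * Real.log (Real.log N) ∧
      (∑ n ∈ Finset.Icc 1 N,
          Real.exp (-(4 * M N) * γ β (Real.pi * (2 * (n : ℝ) - 1) / (2 * N))) *
            csch (γ β (Real.pi * (2 * (n : ℝ) - 1) / (2 * N))))
        ≤ C10 * N * Real.log (Real.log N) := by
  refine ⟨3, 5, by norm_num, by norm_num, ?_⟩
  have hlog := tendsto_log_atTop.comp tendsto_natCast_atTop_atTop
  filter_upwards [hM.eventually_lt_const one_pos, hlog.eventually_gt_atTop 0,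
    (tendsto_log_atTop.comp hlog).eventually_ge_atTop 1] with N hratio hlogN hL β hβ
  simp only [Function.comp_apply] at hlogN hL
  have hM0 := hMpos N
  rw [div_lt_one (mul_pos hM0 hlogN)] at hratio
  have hS := sum_exp_neg_mul_chebyshevAngle_le_log_log (a := 4 * M N / 5) (by positivity) hL
    (by nlinarith [mul_pos hM0 hlogN])
  have hγθ : ∀ n ∈ Icc 1 N, chebyshevAngle N n ∈ Set.Ioc 0 π ∧
      0 ≤ γ β (chebyshevAngle N n) ∧
      2 - cos (chebyshevAngle N n) ≤ cosh (γ β (chebyshevAngle N n)) := fun n hn ↦ by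
    have hθ := chebyshevAngle_mem_Ioc (mem_Icc.1 hn).1 (mem_Icc.1 hn).2
    obtain ⟨hg, hcosh⟩ := hγ β hβ _ hθ
    exact ⟨hθ, hg, two_sub_cos_le_cosh_of_cosh_eq hβ hcosh⟩
  constructor
  · refine (sum_le_sum fun n hn ↦ ?_).trans hS
    obtain ⟨hθ, hg, h⟩ := hγθ n hn
    exact mul_le_mul_of_nonneg_right (exp_neg_mul_le_of_two_sub_cos_le_cosh hθ hg h hM0.le)
      (inv_nonneg.2 hθ.1.le)
  · calc _ ≤ ∑ n ∈ Icc 1 N,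
            π / 2 * (exp (-(4 * M N / 5 * chebyshevAngle N n)) * (chebyshevAngle N n)⁻¹) :=
          sum_le_sum fun n hn ↦ by
            obtain ⟨hθ, hg, h⟩ := hγθ n hn
            exact exp_neg_mul_mul_csch_le_of_two_sub_cos_le_cosh hθ hg h hM0.le
      _ ≤ π / 2 * (3 * N * log (log N)) := by rw [← mul_sum]; gcongr
      _ ≤ 5 * N * log (log N) := by
          have hNL : (0 : ℝ) ≤ N * log (log N) := by positivity
          nlinarith [pi_lt_d2]
end

section
/- lim_{N→∞} (1/(N·ln N)) · ∑_{n=1}^{N} (3 − 4cos θ_n + cos²θ_n)^{−1/2} = 1/π, where θ_n = π(2n−1)/(2N). -/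
/-!
With `u = θ / 2` one has `3 - 4 cos θ + cos² θ = 4 sin² u (1 + sin² u)`. Since
`u - u³/6 ≤ sin u ≤ u`, `sin u ≥ 2u/π` and `1 ≤ √(1 + sin² u) ≤ 1 + u`, every summand lies within `1`
of `1/θ_n`. So the sum is, up to `N`, equal to
`∑ 1/θ_n = (2N/π) ∑ 1/(2n - 1) = (2N/π) (H_{2N} - H_N / 2) = (N/π) log N + O(N)`.
-/

open Filter Finset Real

open scoped Topology

lemma three_sub_four_mul_cos_add_cos_sq (θ : ℝ) :
    3 - 4 * cos θ + cos θ ^ 2 = (2 * sin (θ / 2)) ^ 2 * (1 + sin (θ / 2) ^ 2) := by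
  have hcos : cos θ = 1 - 2 * sin (θ / 2) ^ 2 := by
    have := cos_two_mul' (θ / 2)
    rw [mul_div_cancel₀ _ two_ne_zero, cos_sq'] at this
    linarith
  rw [hcos]
  ring

lemma sqrt_three_sub_four_mul_cos_add_cos_sq {θ : ℝ} (h : 0 ≤ sin (θ / 2)) :
    √(3 - 4 * cos θ + cos θ ^ 2) = 2 * sin (θ / 2) * √(1 + sin (θ / 2) ^ 2) := by
  rw [three_sub_four_mul_cos_add_cos_sq, sqrt_mul (sq_nonneg _), sqrt_sq (by positivity)]

lemma inv_two_mul_sub_one_le_inv_two_mul_sin_mul_sqrt {u : ℝ} (hu₀ : 0 < u) (hu : u < π) :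
    (2 * u)⁻¹ - 1 ≤ (2 * sin u * √(1 + sin u ^ 2))⁻¹ := by
  have hs : 0 < sin u := sin_pos_of_pos_of_lt_pi hu₀ hu
  have hsu : sin u ≤ u := sin_le hu₀.le
  have hroot : √(1 + sin u ^ 2) ≤ 1 + u :=
    sqrt_le_iff.2 ⟨by positivity, by nlinarith⟩
  have hden : 2 * sin u * √(1 + sin u ^ 2) ≤ 2 * u * (1 + u) := by gcongr
  calc (2 * u)⁻¹ - 1 ≤ (2 * u)⁻¹ - (2 * (1 + u))⁻¹ := by
        gcongr
        exact inv_le_one_of_one_le₀ (by linarith)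
    _ = (2 * u * (1 + u))⁻¹ := by field_simp; ring
    _ ≤ (2 * sin u * √(1 + sin u ^ 2))⁻¹ := inv_anti₀ (by positivity) hden

lemma inv_two_mul_sin_le_inv_two_mul_add_one {u : ℝ} (hu₀ : 0 < u) (hu : u ≤ π / 2) :
    (2 * sin u)⁻¹ ≤ (2 * u)⁻¹ + 1 := by
  have hs : 0 < sin u := sin_pos_of_pos_of_lt_pi hu₀ (by linarith [pi_pos])
  have hjordan : 2 * u ≤ π * sin u := by
    have := mul_le_sin hu₀.le hu
    rwa [div_mul_eq_mul_div, div_le_iff₀ pi_pos, mul_comm (sin u)] at this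
  have hcube : u - u ^ 3 / 6 ≤ sin u := sin_ge_sub_cube hu₀.le
  have hsq : u ^ 2 ≤ 12 * sin u := by nlinarith [pi_lt_four]
  have hgap : u - sin u ≤ 2 * u * sin u := by
    nlinarith [mul_le_mul_of_nonneg_left hsq hu₀.le]
  rw [inv_eq_one_div, inv_eq_one_div, div_add_one (by positivity),
    div_le_div_iff₀ (by positivity) (by positivity)]
  linarith

lemma abs_inv_sqrt_three_sub_four_mul_cos_add_cos_sq_sub_inv_le_one {θ : ℝ} (h₀ : 0 < θ)
    (hπ : θ ≤ π) : |(√(3 - 4 * cos θ + cos θ ^ 2))⁻¹ - θ⁻¹| ≤ 1 := by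
  obtain ⟨u, rfl⟩ : ∃ u, θ = 2 * u := ⟨θ / 2, by ring⟩
  have hu₀ : 0 < u := by linarith
  have hs : 0 < sin u := sin_pos_of_pos_of_lt_pi hu₀ (by linarith [pi_pos])
  have hhalf : 2 * u / 2 = u := mul_div_cancel_left₀ u two_ne_zero
  rw [sqrt_three_sub_four_mul_cos_add_cos_sq (by rw [hhalf]; exact hs.le), hhalf, abs_le]
  have hroot : 1 ≤ √(1 + sin u ^ 2) := one_le_sqrt.2 (by nlinarith)
  have hle : (2 * sin u * √(1 + sin u ^ 2))⁻¹ ≤ (2 * sin u)⁻¹ :=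
    inv_anti₀ (by positivity) (le_mul_of_one_le_right (by positivity) hroot)
  constructor
  · linarith [inv_two_mul_sub_one_le_inv_two_mul_sin_mul_sqrt hu₀ (by linarith [pi_pos])]
  · linarith [inv_two_mul_sin_le_inv_two_mul_add_one hu₀ (by linarith)]

lemma sum_Icc_inv_two_mul_sub_one (N : ℕ) :
    ∑ n ∈ Icc 1 N, (2 * (n : ℝ) - 1)⁻¹ = harmonic (2 * N) - harmonic N / 2 := by
  induction N with
  | zero => simp
  | succ N ih =>
    rw [sum_Icc_succ_top (by omega), ih, show 2 * (N + 1) = 2 * N + 1 + 1 by ring,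
      harmonic_succ, harmonic_succ, harmonic_succ]
    push_cast
    rw [show 2 * ((N : ℝ) + 1) - 1 = 2 * N + 1 by ring]
    field_simp
    ring

lemma tendsto_sum_Icc_inv_two_mul_sub_one_sub_log :
    Tendsto (fun N : ℕ => ∑ n ∈ Icc 1 N, (2 * (n : ℝ) - 1)⁻¹ - log N / 2) atTop
      (𝓝 (eulerMascheroniConstant / 2 + log 2)) := by
  have h2N : Tendsto (fun N : ℕ => 2 * N) atTop atTop :=
    tendsto_id.const_mul_atTop' two_pos
  have := ((tendsto_harmonic_sub_log.comp h2N).sub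
    (tendsto_harmonic_sub_log.div_const 2)).add_const (log 2)
  convert this.congr' ?_ using 2
  · ring
  filter_upwards [eventually_ne_atTop 0] with N hN
  rw [Function.comp_apply, sum_Icc_inv_two_mul_sub_one, Nat.cast_mul, Nat.cast_ofNat,
    log_mul two_ne_zero (Nat.cast_ne_zero.2 hN)]
  ring

lemma tendsto_sum_Icc_inv_two_mul_sub_one_div_log :
    Tendsto (fun N : ℕ => (∑ n ∈ Icc 1 N, (2 * (n : ℝ) - 1)⁻¹) / log N) atTop (𝓝 (1 / 2)) := by
  have hlog : Tendsto (fun N : ℕ => log N) atTop atTop :=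
    tendsto_log_atTop.comp tendsto_natCast_atTop_atTop
  have := (tendsto_sum_Icc_inv_two_mul_sub_one_sub_log.div_atTop hlog).add_const (1 / 2)
  rw [zero_add] at this
  refine this.congr' ?_
  filter_upwards [hlog.eventually_gt_atTop 0] with N hN
  field_simp
  ring

lemma abs_sum_inv_sqrt_sub_sum_inv_le_card {ι : Type*} (s : Finset ι) (θ : ι → ℝ)
    (hθ : ∀ i ∈ s, θ i ∈ Set.Ioc 0 π) :
    |∑ i ∈ s, (√(3 - 4 * cos (θ i) + cos (θ i) ^ 2))⁻¹ - ∑ i ∈ s, (θ i)⁻¹| ≤ #s := by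
  rw [← sum_sub_distrib]
  refine (abs_sum_le_sum_abs _ _).trans ?_
  simpa using sum_le_card_nsmul s _ 1 fun i hi =>
    abs_inv_sqrt_three_sub_four_mul_cos_add_cos_sq_sub_inv_le_one (hθ i hi).1 (hθ i hi).2

lemma pi_mul_two_mul_sub_one_div_mem_Ioc {N n : ℕ} (hn : n ∈ Icc 1 N) :
    π * (2 * n - 1) / (2 * N) ∈ Set.Ioc 0 π := by
  obtain ⟨h₁, h₂⟩ := mem_Icc.1 hn
  have h₁' : (1 : ℝ) ≤ n := by exact_mod_cast h₁
  have h₂' : (n : ℝ) ≤ N := by exact_mod_cast h₂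
  refine ⟨div_pos (mul_pos pi_pos (by linarith)) (by linarith),
    div_le_of_le_mul₀ (by positivity) pi_pos.le ?_⟩
  nlinarith [pi_pos]

lemma sum_Icc_inv_pi_mul_two_mul_sub_one_div (N : ℕ) :
    ∑ n ∈ Icc 1 N, (π * (2 * n - 1) / (2 * N))⁻¹ =
      2 * N / π * ∑ n ∈ Icc 1 N, (2 * (n : ℝ) - 1)⁻¹ := by
  rw [mul_sum]
  refine sum_congr rfl fun n _ => ?_
  rw [inv_div, ← div_div, div_eq_mul_inv]

/-- `lim_{N→∞} (1/(N ln N)) ∑_{n=1}^{N} (3 − 4cos θ_n + cos²θ_n)^{−1/2} = 1/π`, where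
`θ_n = π(2n−1)/(2N)`. -/
theorem stmt9 :
    Tendsto (fun N : ℕ =>
        (1 / ((N : ℝ) * Real.log N)) *
          ∑ n ∈ Finset.Icc 1 N,
            (Real.sqrt (3 - 4 * Real.cos (Real.pi * (2 * (n : ℝ) - 1) / (2 * N)) +
              (Real.cos (Real.pi * (2 * (n : ℝ) - 1) / (2 * N))) ^ 2))⁻¹)
      atTop (nhds (1 / Real.pi)) := by
  have hlog : Tendsto (fun N : ℕ => log N) atTop atTop :=
    tendsto_log_atTop.comp tendsto_natCast_atTop_atTop
  have hmain : Tendsto (fun N : ℕ => 1 / ((N : ℝ) * log N) *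
      ∑ n ∈ Icc 1 N, (π * (2 * (n : ℝ) - 1) / (2 * N))⁻¹) atTop (𝓝 (1 / π)) := by
    convert (tendsto_sum_Icc_inv_two_mul_sub_one_div_log.const_mul (2 / π)).congr' ?_ using 2
    · field_simp
    filter_upwards [eventually_ne_atTop 0] with N hN
    rw [sum_Icc_inv_pi_mul_two_mul_sub_one_div]
    field_simp
  have herr : Tendsto (fun N : ℕ => 1 / ((N : ℝ) * log N) *
      (∑ n ∈ Icc 1 N, (√(3 - 4 * cos (π * (2 * (n : ℝ) - 1) / (2 * N)) +
          cos (π * (2 * (n : ℝ) - 1) / (2 * N)) ^ 2))⁻¹ -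
        ∑ n ∈ Icc 1 N, (π * (2 * (n : ℝ) - 1) / (2 * N))⁻¹)) atTop (𝓝 0) := by
    refine squeeze_zero_norm' ?_ (tendsto_inv_atTop_zero.comp hlog)
    filter_upwards [eventually_gt_atTop 1] with N hN
    have hlogN : 0 < log N := log_pos (by exact_mod_cast hN)
    have hbound := abs_sum_inv_sqrt_sub_sum_inv_le_card (Icc 1 N) _
      fun n hn => pi_mul_two_mul_sub_one_div_mem_Ioc hn
    rw [Nat.card_Icc, Nat.add_sub_cancel] at hbound
    rw [norm_mul, Real.norm_of_nonneg (by positivity), Real.norm_eq_abs, Function.comp_apply]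
    calc 1 / (N * log N) * |_| ≤ 1 / (N * log N) * N := by gcongr
      _ = (log N)⁻¹ := by field_simp
  simpa [mul_sub] using hmain.add herr
end

section
/- For every θ ∈ (0,π] and every β ∈ (0, β_c], where β_c = ln(1+√2)/2, one has g_θ(β) := (coth(2β) − cosh(2β)·cos θ)/sinh(γ_θ(β)) ≥ 0, where γ_θ(β) is the unique γ ≥ 0 with cosh(γ) = coth(2β)cosh(2β) − cos θ. -/
/-- For every `θ ∈ (0,π]` and every `β ∈ (0, β_c]`, one has
`g_θ(β) = (coth(2β) − cosh(2β)cos θ)/sinh(γ_θ(β)) ≥ 0`, where `γ_θ(β)` is the unique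
`γ ≥ 0` with `cosh γ = coth(2β)cosh(2β) − cos θ`. -/
theorem stmt11 (β θ γ : ℝ) (hβ : β ∈ Set.Ioc 0 betac) (hθ : θ ∈ Set.Ioc 0 Real.pi)
    (hγ0 : 0 ≤ γ)
    (hγ : Real.cosh γ = coth (2 * β) * Real.cosh (2 * β) - Real.cos θ) :
    0 ≤ (coth (2 * β) - Real.cosh (2 * β) * Real.cos θ) / Real.sinh γ := by
  obtain ⟨hβ0, hβc⟩ := hβ
  have hs : 0 < Real.sinh (2 * β) := Real.sinh_pos_iff.mpr (by linarith)
  have hc : 0 < Real.cosh (2 * β) := Real.cosh_pos _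
  have hsqrt2 : (0:ℝ) < 1 + Real.sqrt 2 := by positivity
  have hsinh1 : Real.sinh (Real.log (1 + Real.sqrt 2)) = 1 := by
    rw [Real.sinh_eq, Real.exp_log hsqrt2, Real.exp_neg, Real.exp_log hsqrt2]
    have h2 : Real.sqrt 2 ^ 2 = 2 := Real.sq_sqrt (by norm_num)
    field_simp
    nlinarith [h2]
  have hsle : Real.sinh (2 * β) ≤ 1 := by
    rw [← hsinh1]
    exact Real.sinh_le_sinh.mpr (by unfold betac at hβc; linarith)
  have hnum : 0 ≤ coth (2 * β) - Real.cosh (2 * β) * Real.cos θ := by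
    have hcos : Real.cos θ ≤ 1 := Real.cos_le_one θ
    have h1 : Real.cosh (2 * β) * Real.cos θ ≤ Real.cosh (2 * β) := by nlinarith
    have h2 : Real.cosh (2 * β) ≤ coth (2 * β) := by
      unfold coth
      rw [le_div_iff₀ hs]
      nlinarith
    linarith
  exact div_nonneg hnum (Real.sinh_nonneg_iff.mpr hγ0)
end

section
/- For each fixed θ ∈ (0,π], the function β ↦ γ_θ(β) (the unique γ ≥ 0 with cosh(γ) = coth(2β)cosh(2β) − cos θ) is twice differentiable at β_c = ln(1+√2)/2, its first derivative at β_c equals 0, and its second derivative at β_c equals 16/√(3 − 4cos θ + cos²θ). -/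
/-!
Since `coth x * cosh x = sinh x + (sinh x)⁻¹`, the equation reads `cosh γ = f` with
`f β = sinh 2β + (sinh 2β)⁻¹ - cos θ`. Near `β_c` we have `f > 1`, so `γ = arcosh ∘ f` and
`γ' = f' / √(f ^ 2 - 1)`. As `sinh 2β_c = 1`, the numerator `f' = 2 cosh 2β (1 - (sinh 2β)⁻²)`
vanishes at `β_c`, so `γ''(β_c) = f''(β_c) / √(f(β_c) ^ 2 - 1)`, where `f(β_c) = 2 - cos θ` and
`f''(β_c) = 8 cosh² 2β_c = 16`.
-/

open Real Filter Topology

theorem HasDerivAt.arcosh {f : ℝ → ℝ} {f' x : ℝ} (hf : HasDerivAt f f' x) (hfx : 1 < f x) :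
    HasDerivAt (fun y => arcosh (f y)) (f' / √(f x ^ 2 - 1)) x := by
  rw [div_eq_inv_mul]
  exact (hasDerivAt_arcosh hfx).comp x hf

theorem HasDerivAt.div_of_left_eq_zero {u v : ℝ → ℝ} {u' v' a : ℝ} (hu : HasDerivAt u u' a)
    (hua : u a = 0) (hv : HasDerivAt v v' a) (hva : v a ≠ 0) :
    HasDerivAt (fun x => u x / v x) (u' / v a) a := by
  have h := hu.div hv hva
  rwa [hua, zero_mul, sub_zero, sq, mul_div_mul_right _ _ hva] at h

theorem hasDerivAt_deriv_of_cosh_eq {f f' g : ℝ → ℝ} {a L : ℝ}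
    (hg : ∀ᶠ x in 𝓝 a, 0 ≤ g x ∧ cosh (g x) = f x)
    (hf : ∀ᶠ x in 𝓝 a, HasDerivAt f (f' x) x) (hfa : 1 < f a) (hf'a : f' a = 0)
    (hf' : HasDerivAt f' L a) :
    HasDerivAt g 0 a ∧ HasDerivAt (deriv g) (L / √(f a ^ 2 - 1)) a := by
  have hg_eq : g =ᶠ[𝓝 a] fun x => arcosh (f x) := hg.mono fun x ⟨hx0, hx⟩ =>
    (arcosh_cosh hx0).symm.trans (congrArg arcosh hx)
  have hf1 : ∀ᶠ x in 𝓝 a, 1 < f x :=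
    hf.self_of_nhds.continuousAt.eventually (lt_mem_nhds hfa)
  have hderiv : ∀ᶠ x in 𝓝 a, HasDerivAt g (f' x / √(f x ^ 2 - 1)) x := by
    filter_upwards [hg_eq.eventually_nhds, hf, hf1] with x hx hfx hf1x
    exact (hfx.arcosh hf1x).congr_of_eventuallyEq hx
  have hpos : 0 < f a ^ 2 - 1 := by nlinarith
  have hsqrt : HasDerivAt (fun x => √(f x ^ 2 - 1)) _ a :=
    ((hf.self_of_nhds.pow 2).sub_const 1).sqrt hpos.ne'
  refine ⟨by simpa [hf'a] using hderiv.self_of_nhds, ?_⟩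
  refine (hf'.div_of_left_eq_zero hf'a hsqrt (sqrt_pos.2 hpos).ne').congr_of_eventuallyEq ?_
  exact hderiv.mono fun x hx => hx.deriv

theorem coth_mul_cosh_s12 (x : ℝ) : coth x * cosh x = sinh x + (sinh x)⁻¹ := by
  rw [coth, div_mul_eq_mul_div, ← sq, cosh_sq', add_div, one_div, sq, mul_self_div_self, add_comm]

theorem two_mul_betac : 2 * betac = log (1 + √2) := mul_div_cancel₀ _ two_ne_zero

theorem inv_one_add_sqrt_two : (1 + √2)⁻¹ = √2 - 1 :=
  inv_eq_of_mul_eq_one_right (by linear_combination sq_sqrt (zero_le_two : (0 : ℝ) ≤ 2))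

theorem sinh_two_mul_betac : sinh (2 * betac) = 1 := by
  rw [two_mul_betac, sinh_log (by positivity), inv_one_add_sqrt_two]
  ring

theorem cosh_two_mul_betac : cosh (2 * betac) = √2 := by
  rw [two_mul_betac, cosh_log (by positivity), inv_one_add_sqrt_two]
  ring

theorem hasDerivAt_sinh_two_mul (β : ℝ) :
    HasDerivAt (fun β => sinh (2 * β)) (2 * cosh (2 * β)) β := by
  simpa [mul_comm] using ((hasDerivAt_id β).const_mul 2).sinh

theorem hasDerivAt_cosh_two_mul (β : ℝ) :
    HasDerivAt (fun β => cosh (2 * β)) (2 * sinh (2 * β)) β := by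
  simpa [mul_comm] using ((hasDerivAt_id β).const_mul 2).cosh

theorem hasDerivAt_sinh_two_mul_add_inv {β : ℝ} (hβ : sinh (2 * β) ≠ 0) :
    HasDerivAt (fun β => sinh (2 * β) + (sinh (2 * β))⁻¹)
      (2 * cosh (2 * β) * (1 - (sinh (2 * β) ^ 2)⁻¹)) β := by
  refine ((hasDerivAt_sinh_two_mul β).add ((hasDerivAt_sinh_two_mul β).inv hβ)).congr_deriv ?_
  field_simp
  ring

theorem hasDerivAt_deriv_sinh_two_mul_add_inv_betac :
    HasDerivAt (fun β => 2 * cosh (2 * β) * (1 - (sinh (2 * β) ^ 2)⁻¹)) 16 betac := by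
  have hne : sinh (2 * betac) ^ 2 ≠ 0 := by simp [sinh_two_mul_betac]
  refine (((hasDerivAt_cosh_two_mul betac).const_mul 2).mul
    ((((hasDerivAt_sinh_two_mul betac).pow 2).inv hne).const_sub 1)).congr_deriv ?_
  simp only [sinh_two_mul_betac, cosh_two_mul_betac, Pi.inv_apply, Pi.pow_apply, one_pow, inv_one,
    sub_self, mul_zero, mul_one, pow_one, Nat.cast_ofNat, Nat.add_one_sub_one, div_one, neg_neg,
    zero_add]
  linear_combination 8 * sq_sqrt (zero_le_two : (0 : ℝ) ≤ 2)

/-- For each fixed `θ ∈ (0,π]`, the function `β ↦ γ_θ(β)` (the unique `γ ≥ 0` with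
`cosh γ = coth(2β)cosh(2β) − cos θ`) is twice differentiable at `β_c = ln(1+√2)/2`, its
first derivative at `β_c` equals `0`, and its second derivative at `β_c` equals
`16/√(3 − 4cos θ + cos²θ)`. -/
theorem stmt12 (θ : ℝ) (hθ : θ ∈ Set.Ioc 0 Real.pi) (γ : ℝ → ℝ)
    (hγ : ∀ β > (0 : ℝ),
      0 ≤ γ β ∧ Real.cosh (γ β) = coth (2 * β) * Real.cosh (2 * β) - Real.cos θ) :
    DifferentiableAt ℝ γ betac ∧
    DifferentiableAt ℝ (deriv γ) betac ∧
    deriv γ betac = 0 ∧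
    deriv (deriv γ) betac = 16 / Real.sqrt (3 - 4 * Real.cos θ + (Real.cos θ) ^ 2) := by
  have hcos : cos θ < 1 := by
    simpa using cos_lt_cos_of_nonneg_of_le_pi le_rfl hθ.2 hθ.1
  have hpos : ∀ᶠ β in 𝓝 betac, 0 < β :=
    lt_mem_nhds (div_pos (log_pos (by simp)) two_pos)
  have hγ' : ∀ᶠ β in 𝓝 betac,
      0 ≤ γ β ∧ cosh (γ β) = sinh (2 * β) + (sinh (2 * β))⁻¹ - cos θ :=
    hpos.mono fun β hβ => by rw [← coth_mul_cosh_s12]; exact hγ β hβ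
  have hderiv : ∀ᶠ β in 𝓝 betac, HasDerivAt (fun β => sinh (2 * β) + (sinh (2 * β))⁻¹ - cos θ)
      (2 * cosh (2 * β) * (1 - (sinh (2 * β) ^ 2)⁻¹)) β :=
    hpos.mono fun β hβ =>
      (hasDerivAt_sinh_two_mul_add_inv (sinh_pos_iff.2 (by linarith)).ne').sub_const _
  obtain ⟨h1, h2⟩ := hasDerivAt_deriv_of_cosh_eq hγ' hderiv
    (by simp only [sinh_two_mul_betac]; linarith) (by simp [sinh_two_mul_betac])
    hasDerivAt_deriv_sinh_two_mul_add_inv_betac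
  refine ⟨h1.differentiableAt, h2.differentiableAt, h1.deriv, h2.deriv.trans ?_⟩
  simp only [sinh_two_mul_betac]
  congr 2
  ring
end
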